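/- For continuous F, G : [0,∞) → ℂ with |F(s)| ≤ A·e^{νs}/(M₀(1+s²)) and |G(s)| ≤ B·e^{νs}/(M₀(1+s²)), and any integer j ≥ 0, one has |∫₀^q s^j F(s) G(q−s) ds| ≤ q^j · A·B·e^{νq}/(M₀(1+q²)) for all q ≥ 0. -/

import Mathlib

open MeasureTheory Real Set

/-- The constant `M₀ = sup_{s>0} 2(1+s²)(ln(1+s²)+s arctan s)/(s(s²+4))`. -/
noncomputable def M0 : ℝ :=
  sSup ((fun s : ℝ =>
      2 * (1 + s ^ 2) * (Real.log (1 + s ^ 2) + s * Real.arctan s) / (s * (s ^ 2 + 4))) ''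
    Set.Ioi 0)

/-!
The exponential weights multiply to `e^{νq}` and `s^j ≤ q^j` on `[0, q]`, so the integral is at
most `q^j A B e^{νq} / M₀²` times `∫₀^q ds / ((1+s²)(1+(q-s)²))`. By partial fractions this
integral equals `2 (log(1+q²) + q arctan q) / (q (q²+4))`, and `M₀` is by definition the
smallest constant making it `≤ M₀ / (1+q²)` for every `q > 0`.
-/

noncomputable def m0Ratio (s : ℝ) : ℝ :=
  2 * (1 + s ^ 2) * (log (1 + s ^ 2) + s * arctan s) / (s * (s ^ 2 + 4))

lemma m0Ratio_pos {s : ℝ} (hs : 0 < s) : 0 < m0Ratio s := by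
  have hlog : 0 < log (1 + s ^ 2) := log_pos (by nlinarith)
  have harctan : 0 < arctan s := arctan_pos.mpr hs
  unfold m0Ratio
  positivity

lemma m0Ratio_le {s : ℝ} (hs : 0 < s) : m0Ratio s ≤ 4 + π := by
  have hlog : log (1 + s ^ 2) ≤ 2 * s :=
    calc log (1 + s ^ 2) ≤ log ((1 + s) ^ 2) := log_le_log (by positivity) (by nlinarith)
      _ = 2 * log (1 + s) := by rw [log_pow]; norm_num
      _ ≤ 2 * s := by linarith [log_le_sub_one_of_pos (x := 1 + s) (by linarith)]
  have harctan : s * arctan s ≤ s * (π / 2) :=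
    mul_le_mul_of_nonneg_left (arctan_lt_pi_div_two s).le hs.le
  rw [m0Ratio, div_le_iff₀ (by positivity)]
  nlinarith [pi_gt_three, mul_pos hs hs, sq_nonneg (s - 1)]

lemma bddAbove_m0Ratio : BddAbove (m0Ratio '' Ioi 0) :=
  ⟨4 + π, by rintro _ ⟨s, hs, rfl⟩; exact m0Ratio_le hs⟩

lemma m0Ratio_le_M0 {s : ℝ} (hs : 0 < s) : m0Ratio s ≤ M0 :=
  le_csSup bddAbove_m0Ratio ⟨s, hs, rfl⟩

lemma M0_pos : 0 < M0 :=
  (m0Ratio_pos one_pos).trans_le (m0Ratio_le_M0 one_pos)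

lemma continuous_inv_one_add_sq_mul_one_add_sub_sq (q : ℝ) :
    Continuous fun s : ℝ => ((1 + s ^ 2) * (1 + (q - s) ^ 2))⁻¹ :=
  Continuous.inv₀ (by fun_prop) fun s => by positivity

lemma integral_inv_one_add_sq_mul_one_add_sub_sq {q : ℝ} (hq : q ≠ 0) :
    ∫ s in (0 : ℝ)..q, ((1 + s ^ 2) * (1 + (q - s) ^ 2))⁻¹ =
      2 * (log (1 + q ^ 2) + q * arctan q) / (q * (q ^ 2 + 4)) := by
  have hq4 : q ^ 2 + 4 ≠ 0 := by positivity
  -- partial fractions: `(q²+4) / ((1+s²)(1+(q-s)²))` splits into `(2s/q + 1)/(1+s²)` and the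
  -- same term at `q - s`, whose primitives are logarithms and arctangents
  let H : ℝ → ℝ := fun s => (q ^ 2 + 4)⁻¹ *
    (q⁻¹ * log (1 + s ^ 2) + arctan s - q⁻¹ * log (1 + (q - s) ^ 2) - arctan (q - s))
  have hH : ∀ s, HasDerivAt H ((1 + s ^ 2) * (1 + (q - s) ^ 2))⁻¹ s := by
    intro s
    have h1 : 1 + s ^ 2 ≠ 0 := by positivity
    have h2 : 1 + (q - s) ^ 2 ≠ 0 := by positivity
    have hsub : HasDerivAt (fun s : ℝ => q - s) (-1) s := by
      simpa using (hasDerivAt_id s).const_sub q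
    have hlog₁ := (((hasDerivAt_pow 2 s).const_add 1).log h1)
    have hlog₂ := ((((hasDerivAt_pow 2 (q - s)).comp s hsub).const_add 1).log h2)
    have harctan₂ := (hasDerivAt_arctan (q - s)).comp s hsub
    refine (((((hlog₁.const_mul q⁻¹).add (hasDerivAt_arctan s)).sub
      (hlog₂.const_mul q⁻¹)).sub harctan₂).const_mul (q ^ 2 + 4)⁻¹).congr_deriv ?_
    simp only [Function.comp_apply]
    field_simp
    ring
  rw [intervalIntegral.integral_eq_sub_of_hasDerivAt (fun s _ => hH s)
    ((continuous_inv_one_add_sq_mul_one_add_sub_sq q).intervalIntegrable 0 q)]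
  simp only [H, sub_zero, sub_self, arctan_zero]
  field_simp
  norm_num
  ring

lemma integral_inv_one_add_sq_mul_one_add_sub_sq_le {q : ℝ} (hq : 0 ≤ q) :
    ∫ s in (0 : ℝ)..q, ((1 + s ^ 2) * (1 + (q - s) ^ 2))⁻¹ ≤ M0 / (1 + q ^ 2) := by
  rcases hq.eq_or_lt with rfl | hq
  · simpa using M0_pos.le
  rw [integral_inv_one_add_sq_mul_one_add_sub_sq hq.ne', le_div_iff₀ (by positivity)]
  calc 2 * (log (1 + q ^ 2) + q * arctan q) / (q * (q ^ 2 + 4)) * (1 + q ^ 2) = m0Ratio q := by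
        rw [m0Ratio]; ring
    _ ≤ M0 := m0Ratio_le_M0 hq

lemma norm_pow_mul_mul_le {j : ℕ} {ν A B M q s : ℝ} {z w : ℂ} (hs : 0 ≤ s) (hsq : s ≤ q)
    (hz : ‖z‖ ≤ A * exp (ν * s) / (M * (1 + s ^ 2)))
    (hw : ‖w‖ ≤ B * exp (ν * (q - s)) / (M * (1 + (q - s) ^ 2))) :
    ‖(s : ℂ) ^ j * z * w‖ ≤
      q ^ j * (A * B * exp (ν * q) / M ^ 2) * ((1 + s ^ 2) * (1 + (q - s) ^ 2))⁻¹ := by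
  have hq : 0 ≤ q := hs.trans hsq
  have hzbound : 0 ≤ A * exp (ν * s) / (M * (1 + s ^ 2)) := (norm_nonneg z).trans hz
  have hexp : exp (ν * q) = exp (ν * s) * exp (ν * (q - s)) := by rw [← exp_add]; ring_nf
  calc ‖(s : ℂ) ^ j * z * w‖ = s ^ j * ‖z‖ * ‖w‖ := by
        rw [norm_mul, norm_mul, norm_pow, Complex.norm_real, norm_of_nonneg hs]
    _ ≤ q ^ j * (A * exp (ν * s) / (M * (1 + s ^ 2))) *
        (B * exp (ν * (q - s)) / (M * (1 + (q - s) ^ 2))) := by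
        gcongr
    _ = _ := by rw [hexp]; field_simp

theorem stmt_3_general (j : ℕ) (ν A B : ℝ) (hA : 0 ≤ A) (hB : 0 ≤ B)
    (F G : ℝ → ℂ)
    (hF : ∀ s, 0 ≤ s → ‖F s‖ ≤ A * Real.exp (ν * s) / (M0 * (1 + s ^ 2)))
    (hG : ∀ s, 0 ≤ s → ‖G s‖ ≤ B * Real.exp (ν * s) / (M0 * (1 + s ^ 2))) :
    ∀ q, 0 ≤ q →
      ‖∫ s in (0:ℝ)..q, (s : ℂ) ^ j * F s * G (q - s)‖ ≤ q ^ j * A * B * Real.exp (ν * q) / (M0 * (1 + q ^ 2)) := by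
  intro q hq
  have hC : 0 ≤ q ^ j * (A * B * exp (ν * q) / M0 ^ 2) := by positivity
  calc ‖∫ s in (0:ℝ)..q, (s : ℂ) ^ j * F s * G (q - s)‖
      ≤ ∫ s in (0:ℝ)..q,
          q ^ j * (A * B * exp (ν * q) / M0 ^ 2) * ((1 + s ^ 2) * (1 + (q - s) ^ 2))⁻¹ := by
        refine intervalIntegral.norm_integral_le_of_norm_le hq
          (Filter.Eventually.of_forall fun s ⟨hs0, hsq⟩ => ?_)
          ((continuous_const.mul
            (continuous_inv_one_add_sq_mul_one_add_sub_sq q)).intervalIntegrable 0 q)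
        exact norm_pow_mul_mul_le hs0.le hsq (hF s hs0.le) (hG (q - s) (by linarith))
    _ ≤ q ^ j * (A * B * exp (ν * q) / M0 ^ 2) * (M0 / (1 + q ^ 2)) := by
        rw [intervalIntegral.integral_const_mul]
        exact mul_le_mul_of_nonneg_left (integral_inv_one_add_sq_mul_one_add_sub_sq_le hq) hC
    _ = q ^ j * A * B * exp (ν * q) / (M0 * (1 + q ^ 2)) := by
        field_simp [M0_pos.ne']

theorem stmt_3 (j : ℕ) (ν A B : ℝ) (hν : 0 < ν) (hA : 0 ≤ A) (hB : 0 ≤ B)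
    (F G : ℝ → ℂ) (hFc : ContinuousOn F (Set.Ici 0)) (hGc : ContinuousOn G (Set.Ici 0))
    (hF : ∀ s, 0 ≤ s → ‖F s‖ ≤ A * Real.exp (ν * s) / (M0 * (1 + s ^ 2)))
    (hG : ∀ s, 0 ≤ s → ‖G s‖ ≤ B * Real.exp (ν * s) / (M0 * (1 + s ^ 2))) :
    ∀ q, 0 ≤ q →
      ‖∫ s in (0:ℝ)..q, (s : ℂ) ^ j * F s * G (q - s)‖ ≤ q ^ j * A * B * Real.exp (ν * q) / (M0 * (1 + q ^ 2)) :=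
  stmt_3_general j ν A B hA hB F G hF hG
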